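/- arXiv:2209.03209 — 3 statements merged into one kernel-verified Lean document; each statement's English description precedes it below -/
import Mathlib

section
/- Let A be a DG category over a commutative ring k and let I be a strictly full DG subcategory of A, with Drinfeld quotient A/I. Suppose q_* : D(A/I) → D(A) (equivalently, i_* : D(A) → D(I)) preserves compact objects. Then the four functors q* : D(A) → D(A/I), q_* : D(A/I) → D(A), i* : D(I) → D(A) and i_* : D(A) → D(I) all restrict to the full subcategories of compact objects, yielding a half recollement of the triple (D_c(A/I), D_c(A), D_c(I)): adjoint pairs q* : D_c(A) ⇄ D_c(A/I) : q_* and i* : D_c(I) ⇄ D_c(A) : i_* (with q* left adjoint to q_* and i* left adjoint to i_*), in which q_* and i* are fully faithful. -/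
namespace DGRecollement

open CategoryTheory Limits Pretriangulated Opposite ZeroObject

set_option linter.unusedSectionVars false
set_option maxHeartbeats 1000000

universe v u w u'

section Compact

variable (C : Type u) [Category.{v} C]

def IsCompactObj [Preadditive C] (X : C) : Prop :=
  ∀ ⦃ι : Type v⦄ (Y : ι → C) [HasCoproduct Y],
    letI : DecidableEq ι := Classical.decEq ι
    Function.Bijective
      (DFinsupp.sumAddHom (fun i =>
        AddMonoidHom.mk' (fun (g : X ⟶ Y i) => g ≫ Sigma.ι Y i)
          (fun _ _ => Preadditive.add_comp _ _ _ _ _ _)) :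
        (Π₀ i, (X ⟶ Y i)) →+ (X ⟶ ∐ Y))

def IsCompactlyGenerated [Preadditive C] [HasZeroObject C] [HasShift C ℤ] : Prop :=
  ∃ (ι : Type v) (G : ι → C), (∀ i, IsCompactObj C (G i)) ∧
    ∀ X : C, (∀ (i : ι) (n : ℤ) (f : G i ⟶ X⟦n⟧), f = 0) → IsZero X

abbrev CompObj [Preadditive C] : Type u := ObjectProperty.FullSubcategory (fun X : C => IsCompactObj C X)

def homOf [Preadditive C] {X Y : CompObj C} (f : X.obj ⟶ Y.obj) : X ⟶ Y := ObjectProperty.homMk f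

end Compact

section Cone

variable {DI : Type u} {DA : Type u'} [Category.{v} DI] [Category.{v} DA]
  [HasZeroObject DA] [Preadditive DA] [HasShift DA ℤ]
  [∀ n : ℤ, (shiftFunctor DA n).Additive] [Pretriangulated DA]

/-- The class of morphisms of `D(A)` whose cone lies in the essential image of
`i^* : D(I) → D(A)`.  The Drinfeld quotient has the property that
`q^* : D(A) → D(A/I)` is a localization of `D(A)` at this class of morphisms,
i.e. `D(A/I)` is the Verdier quotient `D(A)/D(I)`. -/
def coneInEssImage (F : DI ⥤ DA) : MorphismProperty DA := fun X Y f =>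
  ∃ (Z : DA) (g : Y ⟶ Z) (h : Z ⟶ X⟦(1 : ℤ)⟧),
    (Triangle.mk f g h ∈ distTriang DA) ∧ F.essImage Z

end Cone

section Euler

variable (k : Type w) [Field k]
variable (C : Type u) [Category.{v} C] [Preadditive C] [Linear k C] [HasShift C ℤ]

/-- The Euler pairing `⟨[a],[b]⟩_χ = Σₙ (−1)ⁿ dim_k Hⁿ Hom_A(a,b)
  = Σₙ (−1)ⁿ dim_k Hom_{D(A)}(a, b⟦n⟧)` of two compact objects. -/
noncomputable def eulerChi (a b : CompObj C) : ℤ :=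
  ∑ᶠ n : ℤ, (n.negOnePow : ℤ) * (Module.finrank k ((a.obj : C) ⟶ b.obj⟦n⟧) : ℤ)

/-- `D_c(A)` is Ext-finite: for compact `X`, `Y` the total cohomology of the Hom-complex,
i.e. `⊕ₙ Hom_{D(A)}(X, Y⟦n⟧)`, is finite dimensional over `k`. -/
def ExtFiniteCompacts : Prop :=
  ∀ X Y : C, IsCompactObj C X → IsCompactObj C Y →
    (Set.Finite {n : ℤ | ∃ f : X ⟶ Y⟦n⟧, f ≠ 0}) ∧
      ∀ n : ℤ, Module.Finite k (X ⟶ Y⟦n⟧)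

end Euler

section K0

variable (k : Type w) [Field k]
variable (C : Type u) [Category.{v} C] [HasZeroObject C] [Preadditive C] [HasShift C ℤ]
  [∀ n : ℤ, (shiftFunctor C n).Additive] [Pretriangulated C]

/-- The defining relations of the Grothendieck group `K₀(D_c(A))`:
`[X] - [Y] + [Z]` for every distinguished triangle `X ⟶ Y ⟶ Z ⟶ X⟦1⟧` of compact
objects. -/
def triangleRelSet : Set (FreeAbelianGroup (CompObj C)) :=
  {x | ∃ (X Y Z : CompObj C) (f : (X.obj : C) ⟶ Y.obj) (g : (Y.obj : C) ⟶ Z.obj)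
      (h : (Z.obj : C) ⟶ X.obj⟦(1 : ℤ)⟧),
    (Triangle.mk f g h ∈ distTriang C) ∧
      x = FreeAbelianGroup.of X - FreeAbelianGroup.of Y + FreeAbelianGroup.of Z}

/-- The Grothendieck group `K₀(A) = K₀(D_c(A))`: the free abelian group on the compact
objects of `D(A)` modulo the relations coming from distinguished triangles. -/
def K0 : Type u :=
  FreeAbelianGroup (CompObj C) ⧸ AddSubgroup.closure (triangleRelSet C)

noncomputable instance : AddCommGroup (K0 C) :=
  QuotientAddGroup.Quotient.addCommGroup _

/-- The class in `K₀` of a formal sum of compact objects. -/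
def toK0 : FreeAbelianGroup (CompObj C) →+ K0 C :=
  QuotientAddGroup.mk' _

variable [Linear k C]

/-- The bilinear extension of the Euler pairing to the free abelian group on compact
objects. -/
noncomputable def chiFree (x y : FreeAbelianGroup (CompObj C)) : ℤ :=
  FreeAbelianGroup.lift (fun a => FreeAbelianGroup.lift (fun b => eulerChi k C a b) y) x

/-- The kernel `Ker(χ_A) ⊆ K₀(A)` of the Euler pairing: the classes pairing to zero with
every class (expressed via arbitrary representatives in the free abelian group;
any two representatives of the same `K₀`-class have the same pairings, since the Euler
pairing is additive on distinguished triangles). -/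
noncomputable def kerChi : Set (K0 C) :=
  {x | ∀ x' : FreeAbelianGroup (CompObj C), toK0 C x' = x →
    ∀ y' : FreeAbelianGroup (CompObj C), chiFree k C x' y' = 0}

/-- The numerical Grothendieck group `K₀^num(A) = K₀(A)/Ker(χ_A)`, presented as a quotient
of the free abelian group on compact objects by the triangle relations together with the
kernel of the Euler pairing. -/
noncomputable def K0num : Type u :=
  FreeAbelianGroup (CompObj C) ⧸
    AddSubgroup.closure (triangleRelSet C ∪ {x | toK0 C x ∈ kerChi k C})

noncomputable instance : AddCommGroup (K0num k C) :=
  QuotientAddGroup.Quotient.addCommGroup _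

/-- The class in `K₀^num` of a formal sum of compact objects. -/
noncomputable def toK0num : FreeAbelianGroup (CompObj C) →+ K0num k C :=
  QuotientAddGroup.mk' _

end K0

section Serre

variable (k : Type w) [Field k]
variable (C : Type u) [Category.{v} C] [Preadditive C] [Linear k C]

/-- A Serre functor on a `k`-linear category `C`: an autoequivalence `S` together with
isomorphisms `Hom(x,y)^∨ ≅ Hom(y, Sx)`, bifunctorial in `x` and `y`. -/
structure SerreFunctor where
  /-- the Serre functor -/
  S : C ⥤ C
  /-- `S` is an autoequivalence -/
  equiv : S.IsEquivalence
  /-- the pairing `Hom(x,y) → Hom(y,Sx)^∨`, i.e. the isomorphism `Hom(x,y)^∨ ≅ Hom(y,Sx)`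
  read as a perfect pairing `Hom(x,y) ⊗ Hom(y,Sx) → k` -/
  pairing : ∀ x y : C, (x ⟶ y) →ₗ[k] Module.Dual k (y ⟶ S.obj x)
  /-- the pairing is perfect -/
  bij : ∀ x y : C, Function.Bijective (pairing x y)
  /-- bifunctoriality in the second variable -/
  nat_right : ∀ {x y y' : C} (f : x ⟶ y) (h : y ⟶ y') (φ : y' ⟶ S.obj x),
    pairing x y' (f ≫ h) φ = pairing x y f (h ≫ φ)
  /-- bifunctoriality in the first variable -/
  nat_left : ∀ {x x' y : C} (e : x' ⟶ x) (f : x ⟶ y) (φ : y ⟶ S.obj x'),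
    pairing x' y (e ≫ f) φ = pairing x y f (φ ≫ S.map e)

end Serre

section Saturated

variable (k : Type w) [Field k]
variable (C : Type u) [Category.{v} C] [HasZeroObject C] [Preadditive C] [HasShift C ℤ]
  [∀ n : ℤ, (shiftFunctor C n).Additive] [Pretriangulated C] [Linear k C]

/-- The triangulated category `D_c(A)` of compact objects is *right saturated*: every
contravariant cohomological functor `H : D_c(A)ᵒᵖ → Vect_k` of finite type (it takes
distinguished triangles to exact sequences, and `⊕ₙ H(x⟦n⟧)` is finite dimensional for
every `x`) is representable by an object of `D_c(A)`. -/
def RightSaturatedCompacts : Prop :=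
  ∀ H : (CompObj C)ᵒᵖ ⥤ ModuleCat.{v} k,
    -- `H` is cohomological
    (∀ (X Y Z : CompObj C) (f : (X.obj : C) ⟶ Y.obj) (g : (Y.obj : C) ⟶ Z.obj)
        (h : (Z.obj : C) ⟶ X.obj⟦(1 : ℤ)⟧),
        (Triangle.mk f g h ∈ distTriang C) →
          Function.Exact (H.map (homOf C g).op) (H.map (homOf C f).op)) →
    -- `H` is of finite type
    (∀ x : CompObj C,
      (Set.Finite {n : ℤ | ∃ y : CompObj C,
          Nonempty ((y.obj : C) ≅ x.obj⟦n⟧) ∧ ¬ Subsingleton (H.obj (op y))}) ∧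
      (∀ (n : ℤ) (y : CompObj C), Nonempty ((y.obj : C) ≅ x.obj⟦n⟧) →
          Module.Finite k (H.obj (op y)))) →
    -- then `H` is representable
    ∃ A : CompObj C, Nonempty (H ≅ (linearYoneda k (CompObj C)).obj A)

end Saturated


section Induced

variable {C : Type u} {D : Type u'} [Category.{v} C] [Category.{v} D]
  [Preadditive C] [Preadditive D]

/-- The map on free abelian groups on compact objects induced by a functor which
preserves compact objects (e.g. the map `K₀(A) → K₀(B)` induced by `f^*`). -/
def inducedFreeMap (F : C ⥤ D)
    (hF : ∀ X : C, IsCompactObj C X → IsCompactObj D (F.obj X)) :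
    FreeAbelianGroup (CompObj C) →+ FreeAbelianGroup (CompObj D) :=
  FreeAbelianGroup.map (fun a => ⟨F.obj a.obj, hF a.obj a.property⟩)

end Induced

section Transfer

variable {C : Type u} {D : Type u'} [Category.{v} C] [Category.{v} D]
  [Preadditive C] [Preadditive D] [HasCoproducts.{v} D]

/-- The compactness-transfer lemma: if `Hom_C(B, -) ≅ Hom_D(A, G -)` naturally and
additively, with `G` colimit-preserving and `A` compact, then `B` is compact. -/
lemma isCompactObj_transfer (G : C ⥤ D) [PreservesColimitsOfSize.{v, v} G]
    (A : D) (B : C) (e : ∀ Y : C, (B ⟶ Y) ≃+ (A ⟶ G.obj Y))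
    (he : ∀ {Y Y' : C} (f : B ⟶ Y) (k : Y ⟶ Y'), e Y' (f ≫ k) = e Y f ≫ G.map k)
    (hA : IsCompactObj D A) : IsCompactObj C B := by
  intro ι Y _
  letI : DecidableEq ι := Classical.decEq ι
  haveI : HasCoproduct (fun i => G.obj (Y i)) := inferInstance
  set c : (∐ fun i => G.obj (Y i)) ⟶ G.obj (∐ Y) := sigmaComparison G Y with hc
  haveI : IsIso c := by rw [hc]; infer_instance
  -- the compactness map for `A` and the family `G.obj ∘ Y`
  have hA' := hA (fun i => G.obj (Y i))
  set ΦB : (Π₀ i, (B ⟶ Y i)) →+ (B ⟶ ∐ Y) :=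
    (DFinsupp.sumAddHom (fun i =>
      AddMonoidHom.mk' (fun (g : B ⟶ Y i) => g ≫ Sigma.ι Y i)
        (fun _ _ => Preadditive.add_comp _ _ _ _ _ _))) with hΦB
  set ΦA : (Π₀ i, (A ⟶ G.obj (Y i))) →+ (A ⟶ ∐ fun i => G.obj (Y i)) :=
    (DFinsupp.sumAddHom (fun i =>
      AddMonoidHom.mk' (fun (g : A ⟶ G.obj (Y i)) => g ≫ Sigma.ι (fun i => G.obj (Y i)) i)
        (fun _ _ => Preadditive.add_comp _ _ _ _ _ _))) with hΦA
  have key : ∀ x : Π₀ i, (B ⟶ Y i),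
      e (∐ Y) (ΦB x) = ΦA ((DFinsupp.mapRange.addEquiv (fun i => e (Y i))) x) ≫ c := by
    intro x
    have : (e (∐ Y)).toAddMonoidHom.comp ΦB =
        (AddMonoidHom.mk' (fun (g : A ⟶ ∐ fun i => G.obj (Y i)) => g ≫ c)
          (fun _ _ => Preadditive.add_comp _ _ _ _ _ _)).comp
          (ΦA.comp (DFinsupp.mapRange.addEquiv (fun i => e (Y i))).toAddMonoidHom) := by
      apply DFinsupp.addHom_ext
      intro i g
      simp only [AddMonoidHom.comp_apply, AddEquiv.coe_toAddMonoidHom, hΦB, hΦA,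
        DFinsupp.sumAddHom_single, AddMonoidHom.mk'_apply]
      rw [show ((DFinsupp.mapRange.addEquiv (fun i => e (Y i))) (DFinsupp.single i g)) =
          DFinsupp.single i (e (Y i) g) from DFinsupp.mapRange_single (hf := fun i => (e (Y i)).map_zero)]
      rw [DFinsupp.sumAddHom_single]
      simp only [AddMonoidHom.mk'_apply, Category.assoc, hc, ι_comp_sigmaComparison]
      exact he g (Sigma.ι Y i)
    exact DFunLike.congr_fun this x
  have hbij : Function.Bijective (fun x : Π₀ i, (B ⟶ Y i) =>
      ΦA ((DFinsupp.mapRange.addEquiv (fun i => e (Y i))) x) ≫ c) := by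
    have hcbij : Function.Bijective (fun g : A ⟶ (∐ fun i => G.obj (Y i)) => g ≫ c) := by
      constructor
      · intro a b h
        have := congrArg (fun t => t ≫ inv c) h
        simpa using this
      · intro g
        exact ⟨g ≫ inv c, by simp⟩
    exact Function.Bijective.comp hcbij (Function.Bijective.comp hA'
      (DFinsupp.mapRange.addEquiv (fun i => e (Y i))).bijective)
  have : Function.Bijective (⇑(e (∐ Y)) ∘ ⇑ΦB) := by
    have : ⇑(e (∐ Y)) ∘ ⇑ΦB = fun x => ΦA ((DFinsupp.mapRange.addEquiv (fun i => e (Y i))) x) ≫ c := by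
      funext x; exact key x
    rw [this]; exact hbij
  exact (Function.Bijective.of_comp_iff' (e (∐ Y)).bijective ⇑ΦB).mp this

end Transfer


section CompactClosure

variable {C : Type u} {D : Type u'} [Category.{v} C] [Category.{v} D]
  [Preadditive C] [Preadditive D]

/-- A left adjoint whose right adjoint is additive and colimit-preserving
sends compact objects to compact objects. -/
lemma isCompactObj_of_adjunction [HasCoproducts.{v} C] {L : C ⥤ D} {R : D ⥤ C}
    (adj : L ⊣ R) [R.Additive] [PreservesColimitsOfSize.{v, v} R]
    (A : C) (hA : IsCompactObj C A) : IsCompactObj D (L.obj A) := by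
  refine isCompactObj_transfer R A (L.obj A)
    (fun Y => AddEquiv.mk' (adj.homEquiv A Y) ?_) ?_ hA
  · intro f g
    simp only [Adjunction.homEquiv_unit, Functor.map_add, Preadditive.comp_add]
  · intro Y Y' f k
    exact adj.homEquiv_naturality_right f k

/-- A fully faithful additive colimit-preserving functor reflects compactness. -/
lemma isCompactObj_of_fullyFaithful [HasCoproducts.{v} D] (G : C ⥤ D)
    (hG : G.FullyFaithful) [G.Additive] [PreservesColimitsOfSize.{v, v} G]
    (B : C) (hB : IsCompactObj D (G.obj B)) : IsCompactObj C B := by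
  refine isCompactObj_transfer G (G.obj B) B
    (fun Y => AddEquiv.mk' (hG.homEquiv) ?_) ?_ hB
  · intro f g
    exact G.map_add
  · intro Y Y' f k
    exact G.map_comp f k

end CompactClosure

section CompactClosure₂

variable {C : Type u} [Category.{v} C] [Preadditive C] [HasCoproducts.{v} C]

lemma IsCompactObj.of_iso {A B : C} (h : A ≅ B) (hA : IsCompactObj C A) :
    IsCompactObj C B := by
  refine isCompactObj_transfer (𝟭 C) A B
    (fun Y => AddEquiv.mk' ⟨fun f => h.hom ≫ f, fun g => h.inv ≫ g,
      fun f => by simp, fun g => by simp⟩ ?_) ?_ hA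
  · intro f g
    exact Preadditive.comp_add _ _ _ _ _ _
  · intro Y Y' f k
    show h.hom ≫ (f ≫ k) = (h.hom ≫ f) ≫ (𝟭 C).map k
    simp

variable [HasShift C ℤ] [∀ n : ℤ, (shiftFunctor C n).Additive]

lemma IsCompactObj.shiftObj {A : C} (hA : IsCompactObj C A) (n : ℤ) :
    IsCompactObj C (A⟦n⟧) :=
  haveI : ((shiftEquiv' C n (-n) (add_neg_cancel n)).inverse).Additive :=
    (inferInstance : (shiftFunctor C (-n)).Additive)
  haveI : PreservesColimitsOfSize.{v, v} (shiftFunctor C (-n)) :=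
    (shiftEquiv' C (-n) n (neg_add_cancel n)).toAdjunction.leftAdjoint_preservesColimits
  isCompactObj_of_adjunction (shiftEquiv' C n (-n) (add_neg_cancel n)).toAdjunction A hA

end CompactClosure₂


section DFinsuppLift

lemma dfinsupp_lift {ι : Type*} [DecidableEq ι] {M N : ι → Type*}
    [∀ i, AddCommGroup (M i)] [∀ i, AddCommGroup (N i)]
    (f : ∀ i, M i →+ N i) (x : Π₀ i, N i) (hx : ∀ i, ∃ m, f i m = x i) :
    ∃ y : Π₀ i, M i, ∀ i, f i (y i) = x i := by
  revert hx
  induction x using DFinsupp.induction with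
  | h0 => exact fun _ => ⟨0, fun i => by simp⟩
  | ha i b rest hrest hb ih =>
    intro hx
    have hrest' : ∀ j, ∃ m, f j m = rest j := by
      intro j
      by_cases hj : j = i
      · subst hj; exact ⟨0, by rw [hrest, map_zero]⟩
      · obtain ⟨m, hm⟩ := hx j
        refine ⟨m, ?_⟩
        rw [hm, DFinsupp.add_apply, DFinsupp.single_apply, dif_neg (fun h => hj h.symm), zero_add]
    obtain ⟨y', hy'⟩ := ih hrest'
    obtain ⟨mb, hmb⟩ := hx i
    refine ⟨DFinsupp.single i (mb - y' i) + y', fun j => ?_⟩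
    by_cases hj : j = i
    · subst hj
      have h1 : (DFinsupp.single j (mb - y' j) + y') j = mb := by
        rw [DFinsupp.add_apply, DFinsupp.single_apply, dif_pos rfl]
        exact sub_add_cancel _ _
      rw [h1, hmb]
    · rw [DFinsupp.add_apply, DFinsupp.single_apply, dif_neg (fun h => hj h.symm), zero_add,
        hy', DFinsupp.add_apply, DFinsupp.single_apply, dif_neg (fun h => hj h.symm), zero_add]

end DFinsuppLift

section Cmap

variable {C : Type u} [Category.{v} C] [Preadditive C]

/-- The canonical comparison map appearing in the definition of compactness. -/
noncomputable def cmap (W : C) {ι : Type v} [DecidableEq ι] (Y : ι → C) [HasCoproduct Y] :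
    (Π₀ i, (W ⟶ Y i)) →+ (W ⟶ ∐ Y) :=
  DFinsupp.sumAddHom (fun i =>
    AddMonoidHom.mk' (fun (g : W ⟶ Y i) => g ≫ Sigma.ι Y i)
      (fun _ _ => Preadditive.add_comp _ _ _ _ _ _))

lemma cmap_single (W : C) {ι : Type v} [DecidableEq ι] (Y : ι → C) [HasCoproduct Y]
    (i : ι) (g : W ⟶ Y i) : cmap W Y (DFinsupp.single i g) = g ≫ Sigma.ι Y i :=
  DFinsupp.sumAddHom_single _ _ _

lemma cmap_natural {A B : C} (a : A ⟶ B) {ι : Type v} [DecidableEq ι] (Y : ι → C)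
    [HasCoproduct Y] (x : Π₀ i, (B ⟶ Y i)) :
    a ≫ cmap B Y x =
      cmap A Y (DFinsupp.mapRange (fun i (g : B ⟶ Y i) => a ≫ g) (fun _ => comp_zero) x) := by
  induction x using DFinsupp.induction with
  | h0 => simp
  | ha i b rest h1 h2 ih =>
    rw [DFinsupp.mapRange_add _ (fun _ => comp_zero)
      (fun _ x y => Preadditive.comp_add _ _ _ _ _ _), map_add, map_add,
      Preadditive.comp_add, ih, DFinsupp.mapRange_single, cmap_single, cmap_single,
      Category.assoc]

end Cmap


section TwoOfThree

variable {C : Type u} [Category.{v} C] [HasZeroObject C] [Preadditive C] [HasShift C ℤ]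
  [∀ n : ℤ, (shiftFunctor C n).Additive] [Pretriangulated C] [HasCoproducts.{v} C]

/-- In a distinguished triangle, if the second and third objects are compact then so is
the first. -/
lemma isCompactObj₁_of_distTriang (T : Triangle C) (hT : T ∈ distTriang C)
    (h₂ : IsCompactObj C T.obj₂) (h₃ : IsCompactObj C T.obj₃) :
    IsCompactObj C T.obj₁ := by
  intro ι Y _
  letI : DecidableEq ι := Classical.decEq ι
  have hinv1 : T.invRotate ∈ distTriang C := inv_rot_of_distTriang _ hT
  have hinv2 : T.invRotate.invRotate ∈ distTriang C := inv_rot_of_distTriang _ hinv1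
  set d : (T.obj₃)⟦(-1 : ℤ)⟧ ⟶ T.obj₁ := T.invRotate.mor₁ with hd
  set d2 : (T.obj₂)⟦(-1 : ℤ)⟧ ⟶ (T.obj₃)⟦(-1 : ℤ)⟧ := T.invRotate.invRotate.mor₁ with hd2
  have hΦ₁ : Function.Bijective (cmap T.obj₃ Y) := h₃ Y
  have hΦ₂ : Function.Bijective (cmap T.obj₂ Y) := h₂ Y
  have hΦ₄ : Function.Bijective (cmap ((T.obj₃)⟦(-1 : ℤ)⟧) Y) := h₃.shiftObj (-1) Y
  have hΦ₅ : Function.Bijective (cmap ((T.obj₂)⟦(-1 : ℤ)⟧) Y) := h₂.shiftObj (-1) Y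
  have hab : T.mor₁ ≫ T.mor₂ = 0 := comp_distTriang_mor_zero₁₂ _ hT
  have hda : d ≫ T.mor₁ = 0 := comp_distTriang_mor_zero₁₂ _ hinv1
  have hd2d : d2 ≫ d = 0 := comp_distTriang_mor_zero₁₂ _ hinv2
  show Function.Bijective (cmap T.obj₁ Y)
  constructor
  · -- injectivity
    suffices h : ∀ x : Π₀ i, (T.obj₁ ⟶ Y i), cmap T.obj₁ Y x = 0 → x = 0 by
      intro x₁ x₂ hx
      have := h (x₁ - x₂) (by rw [map_sub, hx, sub_self])
      exact sub_eq_zero.mp this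
    intro x hx0
    have h4 : DFinsupp.mapRange (fun i (g : T.obj₁ ⟶ Y i) => d ≫ g) (fun _ => comp_zero) x
        = 0 := by
      apply hΦ₄.injective
      rw [← cmap_natural, hx0, comp_zero, map_zero]
    have h5 : ∀ i, ∃ m : T.obj₂ ⟶ Y i, T.mor₁ ≫ m = x i := by
      intro i
      have hdx : d ≫ x i = 0 := by
        have := DFunLike.congr_fun h4 i
        rwa [DFinsupp.mapRange_apply] at this
      obtain ⟨m, hm⟩ := Triangle.yoneda_exact₂ _ hinv1 (x i) hdx
      exact ⟨m, hm.symm⟩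
    obtain ⟨y, hy⟩ := dfinsupp_lift (fun i =>
      AddMonoidHom.mk' (fun (m : T.obj₂ ⟶ Y i) => T.mor₁ ≫ m)
        (fun _ _ => Preadditive.comp_add _ _ _ _ _ _)) x h5
    have hxy : x = DFinsupp.mapRange (fun i (g : T.obj₂ ⟶ Y i) => T.mor₁ ≫ g)
        (fun _ => comp_zero) y := by
      ext i
      rw [DFinsupp.mapRange_apply]
      exact (hy i).symm
    have h6 : T.mor₁ ≫ cmap T.obj₂ Y y = 0 := by
      rw [cmap_natural, ← hxy, hx0]
    obtain ⟨s, hs⟩ := Triangle.yoneda_exact₂ _ hT (cmap T.obj₂ Y y) h6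
    obtain ⟨z, hz⟩ := hΦ₁.surjective s
    have h7 : cmap T.obj₂ Y y = cmap T.obj₂ Y
        (DFinsupp.mapRange (fun i (g : T.obj₃ ⟶ Y i) => T.mor₂ ≫ g) (fun _ => comp_zero) z) := by
      rw [← cmap_natural, hz, hs]
    have hy2 := hΦ₂.injective h7
    ext i
    rw [hxy, DFinsupp.mapRange_apply, hy2, DFinsupp.mapRange_apply, ← Category.assoc, hab,
      zero_comp]
    rfl
  · -- surjectivity
    intro t
    obtain ⟨s₄, hs₄⟩ := hΦ₄.surjective (d ≫ t)
    have h8 : DFinsupp.mapRange (fun i (g : (T.obj₃)⟦(-1 : ℤ)⟧ ⟶ Y i) => d2 ≫ g)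
        (fun _ => comp_zero) s₄ = 0 := by
      apply hΦ₅.injective
      rw [← cmap_natural, hs₄, ← Category.assoc, hd2d, zero_comp, map_zero]
    have h9 : ∀ i, ∃ m : T.obj₁ ⟶ Y i, d ≫ m = s₄ i := by
      intro i
      have : d2 ≫ s₄ i = 0 := by
        have := DFunLike.congr_fun h8 i
        rwa [DFinsupp.mapRange_apply] at this
      obtain ⟨m, hm⟩ := Triangle.yoneda_exact₂ _ hinv2 (s₄ i) this
      exact ⟨m, hm.symm⟩
    obtain ⟨r, hr⟩ := dfinsupp_lift (fun i =>
      AddMonoidHom.mk' (fun (m : T.obj₁ ⟶ Y i) => d ≫ m)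
        (fun _ _ => Preadditive.comp_add _ _ _ _ _ _)) s₄ h9
    have h10 : d ≫ (t - cmap T.obj₁ Y r) = 0 := by
      rw [Preadditive.comp_sub, cmap_natural]
      rw [show DFinsupp.mapRange (fun i (g : T.obj₁ ⟶ Y i) => d ≫ g) (fun _ => comp_zero) r
          = s₄ from DFinsupp.ext fun i => by rw [DFinsupp.mapRange_apply]; exact hr i]
      rw [hs₄, sub_self]
    obtain ⟨s', hs'⟩ := Triangle.yoneda_exact₂ _ hinv1 (t - cmap T.obj₁ Y r) h10
    obtain ⟨q, hq⟩ := hΦ₂.surjective s'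
    refine ⟨r + DFinsupp.mapRange (fun i (g : T.obj₂ ⟶ Y i) => T.mor₁ ≫ g)
      (fun _ => comp_zero) q, ?_⟩
    have hs'' : t - cmap T.obj₁ Y r = T.mor₁ ≫ s' := hs'
    rw [map_add, ← cmap_natural, hq, ← hs'']
    abel

end TwoOfThree




section Aux2

variable {DI DA DQ : Type u}
  [Category.{v} DI] [HasZeroObject DI] [Preadditive DI] [HasShift DI ℤ]
  [∀ n : ℤ, (shiftFunctor DI n).Additive] [Pretriangulated DI]
  [Category.{v} DA] [HasZeroObject DA] [Preadditive DA] [HasShift DA ℤ]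
  [∀ n : ℤ, (shiftFunctor DA n).Additive] [Pretriangulated DA]
  [Category.{v} DQ] [HasZeroObject DQ] [Preadditive DQ] [HasShift DQ ℤ]
  [∀ n : ℤ, (shiftFunctor DQ n).Additive] [Pretriangulated DQ]
  (iE : DI ⥤ DA) (iR : DA ⥤ DI) (qE : DA ⥤ DQ) (qR : DQ ⥤ DA)
  [iE.CommShift ℤ] [qE.CommShift ℤ] [qR.CommShift ℤ]
  [iE.IsTriangulated] [qE.IsTriangulated] [qR.IsTriangulated]

lemma essImage_shift {A : DA} (hA : iE.essImage A) (n : ℤ) :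
    iE.essImage (A⟦n⟧) := by
  obtain ⟨T, ⟨e⟩⟩ := hA
  exact ⟨T⟦n⟧, ⟨(iE.commShiftIso n).app T ≪≫ (shiftFunctor DA n).mapIso e⟩⟩

lemma isZero_qE_of_essImage (hloc : qE.IsLocalization (coneInEssImage iE))
    {A : DA} (hA : iE.essImage A) : IsZero (qE.obj A) := by
  have hdist : Triangle.mk (0 : A ⟶ 0) (0 : (0 : DA) ⟶ A⟦(1 : ℤ)⟧) (-(𝟙 A)⟦(1 : ℤ)⟧') ∈
      distTriang DA := by
    have := rot_of_distTriang _ (contractible_distinguished A)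
    exact this
  have hW : coneInEssImage iE ((0 : A ⟶ (0 : DA))) :=
    ⟨A⟦(1 : ℤ)⟧, 0, -(𝟙 A)⟦(1 : ℤ)⟧', hdist, essImage_shift iE hA 1⟩
  haveI := hloc
  haveI : IsIso (qE.map (0 : A ⟶ (0 : DA))) :=
    Localization.inverts qE (coneInEssImage iE) _ hW
  exact IsZero.of_iso (qE.map_isZero (isZero_zero DA)) (asIso (qE.map (0 : A ⟶ (0 : DA))))

lemma hom_essImage_qR_zero (hloc : qE.IsLocalization (coneInEssImage iE))
    (adjQ₁ : qE ⊣ qR) {A : DA} (hA : iE.essImage A) {Y : DQ} (f : A ⟶ qR.obj Y) :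
    f = 0 := by
  have hz : IsZero (qE.obj A) := isZero_qE_of_essImage iE qE hloc hA
  have h1 : (adjQ₁.homEquiv A Y).symm f = 0 := hz.eq_of_src _ _
  have h2 := congrArg (adjQ₁.homEquiv A Y) h1
  rw [Equiv.apply_symm_apply] at h2
  rw [h2, Adjunction.homEquiv_unit, Functor.map_zero, comp_zero]

lemma counit_iso (hloc : qE.IsLocalization (coneInEssImage iE)) (adjQ₁ : qE ⊣ qR) (Y : DQ) :
    IsIso (adjQ₁.counit.app Y) := by
  haveI := hloc
  haveI : ((Functor.whiskeringLeft DA DQ DQ).obj qE).Full :=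
    Localization.full_whiskeringLeft qE (coneInEssImage iE) DQ
  haveI : ((Functor.whiskeringLeft DA DQ DQ).obj qE).Faithful :=
    Localization.faithful_whiskeringLeft qE (coneInEssImage iE) DQ
  let σ : ((Functor.whiskeringLeft DA DQ DQ).obj qE).obj (𝟭 DQ) ⟶
      ((Functor.whiskeringLeft DA DQ DQ).obj qE).obj (qR ⋙ qE) :=
    { app := fun X => qE.map (adjQ₁.unit.app X)
      naturality := fun X X' f => by
        dsimp
        rw [← qE.map_comp, ← qE.map_comp]
        congr 1
        exact adjQ₁.unit.naturality f }
  let τ : 𝟭 DQ ⟶ qR ⋙ qE := ((Functor.whiskeringLeft DA DQ DQ).obj qE).preimage σ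
  have hτ : ∀ Z : DA, τ.app (qE.obj Z) = qE.map (adjQ₁.unit.app Z) := fun Z =>
    NatTrans.congr_app (((Functor.whiskeringLeft DA DQ DQ).obj qE).map_preimage σ) Z
  have hτε : τ ≫ adjQ₁.counit = 𝟙 (𝟭 DQ) := by
    apply ((Functor.whiskeringLeft DA DQ DQ).obj qE).map_injective
    apply NatTrans.ext
    funext Z
    show τ.app (qE.obj Z) ≫ adjQ₁.counit.app (qE.obj Z) = 𝟙 (qE.obj Z)
    rw [hτ Z]
    exact adjQ₁.left_triangle_components Z
  have hετ : adjQ₁.counit.app Y ≫ τ.app Y = 𝟙 _ := by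
    have hnat := τ.naturality (adjQ₁.counit.app Y)
    have h1 : adjQ₁.counit.app Y ≫ τ.app Y =
        τ.app (qE.obj (qR.obj Y)) ≫ qE.map (qR.map (adjQ₁.counit.app Y)) := by
      simpa using hnat
    rw [h1, hτ, ← qE.map_comp]
    simp [adjQ₁.right_triangle_components]
  exact ⟨⟨τ.app Y, hετ, by simpa using NatTrans.congr_app hτε Y⟩⟩

lemma isZero_of_local_of_qE (hloc : qE.IsLocalization (coneInEssImage iE)) (D0 : DA)
    (hD0 : ∀ (A : DA), iE.essImage A → ∀ f : A ⟶ D0, f = 0)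
    (hq : IsZero (qE.obj D0)) : IsZero D0 := by
  haveI := hloc
  have hinv : (coneInEssImage iE).op.IsInvertedBy (yoneda.obj D0) := by
    intro P Q ψ hψ
    obtain ⟨Z, g, h, hdist, hZ⟩ := hψ
    rw [isIso_iff_bijective]
    show Function.Bijective (fun f : P.unop ⟶ D0 => ψ.unop ≫ f)
    constructor
    · intro f₁ f₂ h12
      have hker : ∀ f : P.unop ⟶ D0, ψ.unop ≫ f = 0 → f = 0 := by
        intro f hf
        obtain ⟨g', hg'⟩ := Triangle.yoneda_exact₂ _ hdist f hf
        rw [hg', hD0 Z hZ g']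
        exact comp_zero
      have h3 : ψ.unop ≫ (f₁ - f₂) = 0 := by
        rw [Preadditive.comp_sub]
        rw [show ψ.unop ≫ f₁ = ψ.unop ≫ f₂ from h12, sub_self]
      exact sub_eq_zero.mp (hker _ h3)
    · intro f
      have hdist' := inv_rot_of_distTriang _ hdist
      have hzero : (Triangle.mk ψ.unop g h).invRotate.mor₁ ≫ f = 0 :=
        hD0 _ (essImage_shift iE hZ (-1)) _
      obtain ⟨t, ht⟩ := Triangle.yoneda_exact₂ _ hdist' f hzero
      exact ⟨t, ht.symm⟩
  haveI : qE.op.IsLocalization (coneInEssImage iE).op := inferInstance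
  let G := Localization.lift (yoneda.obj D0) hinv qE.op
  let e : qE.op ⋙ G ≅ yoneda.obj D0 :=
    Localization.Lifting.iso qE.op (coneInEssImage iE).op (yoneda.obj D0) G
  have hzero0 : IsZero (qE.obj (0 : DA)) := qE.map_isZero (isZero_zero DA)
  let i1 : (D0 ⟶ D0) ≃ G.obj (op (qE.obj D0)) := (e.app (op D0)).toEquiv.symm
  let i2 : G.obj (op (qE.obj D0)) ≃ G.obj (op (qE.obj (0 : DA))) :=
    (G.mapIso (Iso.op (IsZero.iso hzero0 hq))).toEquiv
  let i3 : G.obj (op (qE.obj (0 : DA))) ≃ ((0 : DA) ⟶ D0) := (e.app (op (0 : DA))).toEquiv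
  haveI : Subsingleton ((0 : DA) ⟶ D0) := ⟨fun a b => (isZero_zero DA).eq_of_src a b⟩
  haveI : Subsingleton (D0 ⟶ D0) := (i1.trans (i2.trans i3)).subsingleton
  rw [IsZero.iff_id_eq_zero]
  exact Subsingleton.elim _ _

end Aux2


section Aux3

variable {DI DA DQ : Type u}
  [Category.{v} DI] [HasZeroObject DI] [Preadditive DI] [HasShift DI ℤ]
  [∀ n : ℤ, (shiftFunctor DI n).Additive] [Pretriangulated DI]
  [Category.{v} DA] [HasZeroObject DA] [Preadditive DA] [HasShift DA ℤ]
  [∀ n : ℤ, (shiftFunctor DA n).Additive] [Pretriangulated DA]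
  [Category.{v} DQ] [HasZeroObject DQ] [Preadditive DQ] [HasShift DQ ℤ]
  [∀ n : ℤ, (shiftFunctor DQ n).Additive] [Pretriangulated DQ]
  [HasCoproducts.{v} DI] [HasCoproducts.{v} DA] [HasCoproducts.{v} DQ]
  (iE : DI ⥤ DA) (iR : DA ⥤ DI) (qE : DA ⥤ DQ) (qR : DQ ⥤ DA) (qSh : DA ⥤ DQ)
  [iE.CommShift ℤ] [qE.CommShift ℤ] [qR.CommShift ℤ]
  [iE.IsTriangulated] [qE.IsTriangulated] [qR.IsTriangulated]

lemma comp_counit_bijective (adjI₁ : iE ⊣ iR) (hiEfull : iE.Full) (X : DA)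
    {A : DA} (hA : iE.essImage A) :
    Function.Bijective (fun g : A ⟶ iE.obj (iR.obj X) => g ≫ adjI₁.counit.app X) := by
  letI := hiEfull
  obtain ⟨T, ⟨e⟩⟩ := hA
  refine Function.bijective_iff_has_inverse.mpr
    ⟨fun h => e.inv ≫ iE.map ((adjI₁.homEquiv T X) (e.hom ≫ h)), ?_, ?_⟩
  · intro g
    set p := iE.preimage (e.hom ≫ g) with hpdef
    have hp : iE.map p = e.hom ≫ g := iE.map_preimage _
    have h3 : e.hom ≫ (g ≫ adjI₁.counit.app X) = (adjI₁.homEquiv T X).symm p := by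
      rw [Adjunction.homEquiv_counit, hp, Category.assoc]
    show e.inv ≫ iE.map ((adjI₁.homEquiv T X) (e.hom ≫ (g ≫ adjI₁.counit.app X))) = g
    rw [h3, Equiv.apply_symm_apply, hp, ← Category.assoc, e.inv_hom_id, Category.id_comp]
  · intro h
    show (e.inv ≫ iE.map ((adjI₁.homEquiv T X) (e.hom ≫ h))) ≫ adjI₁.counit.app X = h
    simp [Adjunction.homEquiv_unit]

lemma comp_counit_shift_bijective (adjI₁ : iE ⊣ iR) (hiEfull : iE.Full) (X : DA)
    {A : DA} (hA : iE.essImage A) (n : ℤ) :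
    Function.Bijective (fun g : A ⟶ (iE.obj (iR.obj X))⟦n⟧ =>
      g ≫ (adjI₁.counit.app X)⟦n⟧') := by
  have adjn := (shiftEquiv' DA (-n) n (neg_add_cancel n)).toAdjunction
  have hbase := comp_counit_bijective iE iR adjI₁ hiEfull X
    (essImage_shift iE hA (-n)) (A := A⟦(-n : ℤ)⟧)
  have heq : (fun g : A ⟶ (iE.obj (iR.obj X))⟦n⟧ => g ≫ (adjI₁.counit.app X)⟦n⟧')
      = (adjn.homEquiv A X) ∘ (fun g' : A⟦(-n : ℤ)⟧ ⟶ iE.obj (iR.obj X) =>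
          g' ≫ adjI₁.counit.app X) ∘ (adjn.homEquiv A (iE.obj (iR.obj X))).symm := by
    funext g
    show g ≫ _ = (adjn.homEquiv A X) (((adjn.homEquiv A _).symm g) ≫ _)
    rw [adjn.homEquiv_naturality_right]
    erw [Equiv.apply_symm_apply]
    rfl
  rw [heq]
  exact (adjn.homEquiv A X).bijective.comp (hbase.comp (Equiv.bijective _))

/-- The main step: if `q_*` preserves compactness of `q^* X`, then `i^* i_* X` is
compact, hence `i_* X` is compact. -/
lemma isCompactObj_iR (adjI₁ : iE ⊣ iR) (adjQ₁ : qE ⊣ qR) (adjQ₂ : qR ⊣ qSh)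
    (hloc : qE.IsLocalization (coneInEssImage iE))
    (hiEfull : iE.Full) (hiEfaithful : iE.Faithful)
    (X : DA) (hX : IsCompactObj DA X)
    (hQc : IsCompactObj DA (qR.obj (qE.obj X))) :
    IsCompactObj DI (iR.obj X) := by
  obtain ⟨Cc, v, w, hTr⟩ := Pretriangulated.distinguished_cocone_triangle (adjI₁.counit.app X)
  -- the cone `Cc` is local
  have hlocC : ∀ (A : DA), iE.essImage A → ∀ f : A ⟶ Cc, f = 0 := by
    intro A hA f
    have h1 : (f ≫ w) ≫ (adjI₁.counit.app X)⟦(1 : ℤ)⟧' = 0 := by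
      rw [Category.assoc]
      rw [show w ≫ (adjI₁.counit.app X)⟦(1 : ℤ)⟧' = 0 from
        comp_distTriang_mor_zero₃₁ _ hTr]
      rw [comp_zero]
    have h2 : f ≫ w = 0 := by
      apply (comp_counit_shift_bijective iE iR adjI₁ hiEfull X hA 1).injective
      show (f ≫ w) ≫ _ = (0 : A ⟶ (iE.obj (iR.obj X))⟦(1 : ℤ)⟧) ≫ _
      rw [h1, zero_comp]
    obtain ⟨g, hg⟩ := Triangle.coyoneda_exact₃ _ hTr f h2
    obtain ⟨g', hg'⟩ := (comp_counit_bijective iE iR adjI₁ hiEfull X hA).surjective g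
    rw [hg, ← hg']
    show (g' ≫ adjI₁.counit.app X) ≫ v = 0
    rw [Category.assoc]
    rw [show adjI₁.counit.app X ≫ v = 0 from comp_distTriang_mor_zero₁₂ _ hTr, comp_zero]
  -- the comparison map `φ : Cc ⟶ q_* q^* X`
  have hη0 : adjI₁.counit.app X ≫ adjQ₁.unit.app X = 0 :=
    hom_essImage_qR_zero iE qE qR hloc adjQ₁ ⟨iR.obj X, ⟨Iso.refl _⟩⟩ _
  obtain ⟨φ, hφ⟩ := Triangle.yoneda_exact₂ _ hTr (adjQ₁.unit.app X) hη0
  obtain ⟨Dd, s, t, hTd⟩ := Pretriangulated.distinguished_cocone_triangle φ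
  -- the cone `Dd` of `φ` is local
  have hlocD : ∀ (A : DA), iE.essImage A → ∀ f : A ⟶ Dd, f = 0 := by
    intro A hA f
    have h1 : f ≫ t = 0 := by
      have adj1 := (shiftEquiv' DA (-1 : ℤ) (1 : ℤ) (by ring)).toAdjunction
      have h2 : (adj1.homEquiv A Cc).symm (f ≫ t) = 0 :=
        hlocC _ (essImage_shift iE hA (-1)) _
      have h3 := congrArg (adj1.homEquiv A Cc) h2
      rw [Equiv.apply_symm_apply] at h3
      refine h3.trans ?_
      rw [Adjunction.homEquiv_unit, Functor.map_zero, comp_zero]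
      rfl
    obtain ⟨g, hg⟩ := Triangle.coyoneda_exact₃ _ hTd f h1
    rw [hg, hom_essImage_qR_zero iE qE qR hloc adjQ₁ hA g]
    exact zero_comp
  -- `q^*` of `Dd` is zero
  haveI := hloc
  have hqv : IsIso (qE.map v) := by
    have hz : IsZero ((qE.mapTriangle.obj (Triangle.mk (adjI₁.counit.app X) v w)).obj₁) :=
      isZero_qE_of_essImage iE qE hloc ⟨iR.obj X, ⟨Iso.refl _⟩⟩
    exact (Triangle.isZero₁_iff_isIso₂ _ (qE.map_distinguished _ hTr)).1 hz
  have hqη : IsIso (qE.map (adjQ₁.unit.app X)) := by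
    haveI hc := counit_iso iE qE qR hloc adjQ₁ (qE.obj X)
    haveI : IsIso (qE.map (adjQ₁.unit.app X) ≫ adjQ₁.counit.app (qE.obj X)) := by
      rw [adjQ₁.left_triangle_components X]
      exact (IsIso.id _)
    exact IsIso.of_isIso_comp_right _ (adjQ₁.counit.app (qE.obj X))
  have hqφ : IsIso (qE.map φ) := by
    have hφ' : adjQ₁.unit.app X = v ≫ φ := hφ
    have hcomp : qE.map v ≫ qE.map φ = qE.map (adjQ₁.unit.app X) := by
      exact (qE.map_comp v φ).symm.trans (congrArg qE.map hφ'.symm)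
    haveI : IsIso (qE.map v ≫ qE.map φ) := by
      rw [hcomp]
      exact hqη
    exact IsIso.of_isIso_comp_left (qE.map v) (qE.map φ)
  have hqD : IsZero (qE.obj Dd) :=
    Triangle.isZero₃_of_isIso₁ _ (qE.map_distinguished _ hTd) hqφ
  -- hence `Dd ≅ 0` and `φ` is an isomorphism
  have hDzero : IsZero Dd := isZero_of_local_of_qE iE qE hloc Dd hlocD hqD
  have hφiso : IsIso φ := (Triangle.isZero₃_iff_isIso₁ _ hTd).1 hDzero
  -- conclude compactness
  have hCc : IsCompactObj DA Cc := hQc.of_iso (asIso φ).symm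
  have h7 : IsCompactObj DA (iE.obj (iR.obj X)) :=
    isCompactObj₁_of_distTriang (Triangle.mk (adjI₁.counit.app X) v w) hTr hX hCc
  haveI : PreservesColimitsOfSize.{v, v} iE := adjI₁.leftAdjoint_preservesColimits
  letI := hiEfull
  letI := hiEfaithful
  exact isCompactObj_of_fullyFaithful iE (Functor.FullyFaithful.ofFullyFaithful iE)
    (iR.obj X) h7

end Aux3


/-- Theorem 3.2 of the paper.  If in the recollement arising from a
Drinfeld quotient `q_* : D(A/I) → D(A)` (equivalently `i_* : D(A) → D(I)`) preserves
compact objects, then all four functors `q^*, q_*, i^*, i_*` restrict to the full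
subcategories of compact objects, giving a \"half recollement\"
`(D_c(A/I), D_c(A), D_c(I))`: adjoint pairs `q^* ⊣ q_*` and `i^* ⊣ i_*` on the compact
subcategories, with `q_*` and `i^*` fully faithful. -/
theorem half_recollement_on_compacts
    (k : Type w) [CommRing k]
    (DI DA DQ : Type u)
    [Category.{v} DI] [HasZeroObject DI] [Preadditive DI] [HasShift DI ℤ]
    [∀ n : ℤ, (shiftFunctor DI n).Additive] [Pretriangulated DI] [Linear k DI]
    [Category.{v} DA] [HasZeroObject DA] [Preadditive DA] [HasShift DA ℤ]
    [∀ n : ℤ, (shiftFunctor DA n).Additive] [Pretriangulated DA] [Linear k DA]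
    [Category.{v} DQ] [HasZeroObject DQ] [Preadditive DQ] [HasShift DQ ℤ]
    [∀ n : ℤ, (shiftFunctor DQ n).Additive] [Pretriangulated DQ] [Linear k DQ]
    [HasCoproducts.{v} DI] [HasCoproducts.{v} DA] [HasCoproducts.{v} DQ]
    (iE : DI ⥤ DA) (iR : DA ⥤ DI) (iSh : DI ⥤ DA)
    (qE : DA ⥤ DQ) (qR : DQ ⥤ DA) (qSh : DA ⥤ DQ)
    [iE.CommShift ℤ] [iR.CommShift ℤ] [iSh.CommShift ℤ]
    [qE.CommShift ℤ] [qR.CommShift ℤ] [qSh.CommShift ℤ]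
    [iE.IsTriangulated] [iR.IsTriangulated] [iSh.IsTriangulated]
    [qE.IsTriangulated] [qR.IsTriangulated] [qSh.IsTriangulated]
    (adjI₁ : iE ⊣ iR) (adjI₂ : iR ⊣ iSh)
    (adjQ₁ : qE ⊣ qR) (adjQ₂ : qR ⊣ qSh)
    -- the defining property of the Drinfeld quotient at the derived level:
    -- `q^* : D(A) → D(A/I)` exhibits `D(A/I)` as the Verdier quotient of `D(A)` by the
    -- image of `D(I)`, i.e. it is a localization of `D(A)` at the class of morphisms
    -- whose cone lies in the essential image of `i^*`
    (hloc : qE.IsLocalization (coneInEssImage iE))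
    -- standard facts: `i^*` is fully faithful and preserves compact objects
    (hiEfull : iE.Full) (hiEfaithful : iE.Faithful)
    (hiEc : ∀ X : DI, IsCompactObj DI X → IsCompactObj DA (iE.obj X))
    -- the derived categories of DG categories are compactly generated
    (hgenI : IsCompactlyGenerated DI) (hgenA : IsCompactlyGenerated DA)
    (hgenQ : IsCompactlyGenerated DQ)
    -- the hypothesis: `q_*` preserves compact objects
    (hqRc : ∀ X : DQ, IsCompactObj DQ X → IsCompactObj DA (qR.obj X)) :
    -- all four functors preserve compactness …
    (∀ X : DA, IsCompactObj DA X → IsCompactObj DQ (qE.obj X)) ∧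
    (∀ X : DQ, IsCompactObj DQ X → IsCompactObj DA (qR.obj X)) ∧
    (∀ X : DI, IsCompactObj DI X → IsCompactObj DA (iE.obj X)) ∧
    (∀ X : DA, IsCompactObj DA X → IsCompactObj DI (iR.obj X)) ∧
    -- … hence restrict to the compact subcategories, where they form the half
    -- recollement `(D_c(A/I), D_c(A), D_c(I))`
    ∃ (qE' : CompObj DA ⥤ CompObj DQ) (qR' : CompObj DQ ⥤ CompObj DA)
      (iE' : CompObj DI ⥤ CompObj DA) (iR' : CompObj DA ⥤ CompObj DI),
      Nonempty (qE' ⋙ ObjectProperty.ι _ ≅ ObjectProperty.ι _ ⋙ qE) ∧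
      Nonempty (qR' ⋙ ObjectProperty.ι _ ≅ ObjectProperty.ι _ ⋙ qR) ∧
      Nonempty (iE' ⋙ ObjectProperty.ι _ ≅ ObjectProperty.ι _ ⋙ iE) ∧
      Nonempty (iR' ⋙ ObjectProperty.ι _ ≅ ObjectProperty.ι _ ⋙ iR) ∧
      Nonempty (qE' ⊣ qR') ∧ Nonempty (iE' ⊣ iR') ∧
      qR'.Full ∧ qR'.Faithful ∧ iE'.Full ∧ iE'.Faithful := by
  haveI := hiEfull
  haveI := hiEfaithful
  haveI : PreservesColimitsOfSize.{v, v} qR := adjQ₂.leftAdjoint_preservesColimits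
  have hqEc : ∀ X : DA, IsCompactObj DA X → IsCompactObj DQ (qE.obj X) :=
    fun X hX => isCompactObj_of_adjunction adjQ₁ X hX
  have hiRc : ∀ X : DA, IsCompactObj DA X → IsCompactObj DI (iR.obj X) :=
    fun X hX => isCompactObj_iR iE iR qE qR qSh adjI₁ adjQ₁ adjQ₂ hloc hiEfull hiEfaithful
      X hX (hqRc _ (hqEc X hX))
  refine ⟨hqEc, hqRc, hiEc, hiRc, ?_⟩
  -- the fully faithfulness of `q_*`
  haveI : ∀ Y, IsIso (adjQ₁.counit.app Y) := counit_iso iE qE qR hloc adjQ₁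
  haveI : IsIso adjQ₁.counit := NatIso.isIso_of_isIso_app _
  have hqRff : qR.FullyFaithful := adjQ₁.fullyFaithfulROfIsIsoCounit
  haveI := hqRff.full
  haveI := hqRff.faithful
  -- the restricted functors
  refine ⟨ObjectProperty.lift _ (ObjectProperty.ι _ ⋙ qE) (fun X => hqEc X.1 X.2),
    ObjectProperty.lift _ (ObjectProperty.ι _ ⋙ qR) (fun X => hqRc X.1 X.2),
    ObjectProperty.lift _ (ObjectProperty.ι _ ⋙ iE) (fun X => hiEc X.1 X.2),
    ObjectProperty.lift _ (ObjectProperty.ι _ ⋙ iR) (fun X => hiRc X.1 X.2),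
    ⟨ObjectProperty.liftCompιIso _ _ _⟩, ⟨ObjectProperty.liftCompιIso _ _ _⟩,
    ⟨ObjectProperty.liftCompιIso _ _ _⟩, ⟨ObjectProperty.liftCompιIso _ _ _⟩,
    ⟨adjQ₁.restrictFullyFaithful (ObjectProperty.fullyFaithfulι _)
      (ObjectProperty.fullyFaithfulι _)
      (ObjectProperty.liftCompιIso _ _ _).symm
      (ObjectProperty.liftCompιIso _ _ _).symm⟩,
    ⟨adjI₁.restrictFullyFaithful (ObjectProperty.fullyFaithfulι _)
      (ObjectProperty.fullyFaithfulι _)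
      (ObjectProperty.liftCompιIso _ _ _).symm
      (ObjectProperty.liftCompιIso _ _ _).symm⟩,
    Functor.Full.of_comp_faithful_iso (ObjectProperty.liftCompιIso _ _ _),
    Functor.Faithful.of_comp_iso (ObjectProperty.liftCompιIso _ _ _),
    Functor.Full.of_comp_faithful_iso (ObjectProperty.liftCompιIso _ _ _),
    Functor.Faithful.of_comp_iso (ObjectProperty.liftCompιIso _ _ _)⟩


end DGRecollement
end

section
/- Let A be a DG category over a field k and let I be a strictly full DG subcategory of A, with Drinfeld quotient A/I. If the triangulated category D_c(A) of compact objects is right saturated, then q_* : D(A/I) → D(A) preserves compact objects. -/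
namespace DGRecollement

open CategoryTheory Limits Pretriangulated Opposite

universe v u w u'

section AuxCompact

variable {C : Type u} [Category.{v} C] [Preadditive C]

lemma isCompactObj_of_homEquiv (G : C ⥤ C) [PreservesColimitsOfSize.{v, v} G]
    {X X' : C} (hX : IsCompactObj C X)
    (Φ : ∀ W : C, (X' ⟶ W) ≃+ (X ⟶ G.obj W))
    (hΦ : ∀ {W W' : C} (u : X' ⟶ W) (t : W ⟶ W'), Φ W' (u ≫ t) = Φ W u ≫ G.map t) :
    IsCompactObj C X' := by
  intro ι Y hY
  letI : DecidableEq ι := Classical.decEq ι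
  haveI : HasCoproduct (fun i => G.obj (Y i)) :=
    HasColimit.mk ⟨_, isColimitOfHasCoproductOfPreservesColimit G Y⟩
  let σ' : (Π₀ i, (X' ⟶ Y i)) →+ (X' ⟶ ∐ Y) :=
    DFinsupp.sumAddHom (fun i =>
      AddMonoidHom.mk' (fun (g : X' ⟶ Y i) => g ≫ Sigma.ι Y i)
        (fun _ _ => Preadditive.add_comp _ _ _ _ _ _))
  let σX : (Π₀ i, (X ⟶ G.obj (Y i))) →+ (X ⟶ ∐ fun i => G.obj (Y i)) :=
    DFinsupp.sumAddHom (fun i =>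
      AddMonoidHom.mk' (fun (g : X ⟶ G.obj (Y i)) => g ≫ Sigma.ι (fun i => G.obj (Y i)) i)
        (fun _ _ => Preadditive.add_comp _ _ _ _ _ _))
  let postc : (X ⟶ ∐ fun i => G.obj (Y i)) →+ (X ⟶ G.obj (∐ Y)) :=
    AddMonoidHom.mk' (fun u => u ≫ sigmaComparison G Y)
      (fun _ _ => Preadditive.add_comp _ _ _ _ _ _)
  let mr : (Π₀ i, (X' ⟶ Y i)) ≃+ (Π₀ i, (X ⟶ G.obj (Y i))) :=
    DFinsupp.mapRange.addEquiv (fun i => Φ (Y i))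
  show Function.Bijective σ'
  have hcomp : (Φ (∐ Y)).toAddMonoidHom.comp σ' =
      postc.comp (σX.comp mr.toAddMonoidHom) := by
    apply DFinsupp.addHom_ext
    intro i g
    simp only [AddMonoidHom.comp_apply, AddEquiv.coe_toAddMonoidHom, σ', σX, postc, mr,
      DFinsupp.sumAddHom_single, AddMonoidHom.mk'_apply, DFinsupp.mapRange.addEquiv_apply,
      DFinsupp.mapRange_single, hΦ, Category.assoc, ι_comp_sigmaComparison]
  have hfun : ⇑σ' = (Φ (∐ Y)).symm ∘ (fun u => u ≫ sigmaComparison G Y) ∘ ⇑σX ∘ ⇑mr := by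
    funext d
    apply (Φ (∐ Y)).injective
    simp only [Function.comp_apply, AddEquiv.apply_symm_apply]
    exact DFunLike.congr_fun hcomp d
  rw [hfun]
  have hc : Function.Bijective (fun u : X ⟶ ∐ fun i => G.obj (Y i) => u ≫ sigmaComparison G Y) := by
    constructor
    · intro u v huv
      simpa using congrArg (fun t => t ≫ inv (sigmaComparison G Y)) huv
    · intro u
      exact ⟨u ≫ inv (sigmaComparison G Y), by simp⟩
  exact ((Φ (∐ Y)).symm.bijective.comp hc).comp ((hX (fun i => G.obj (Y i))).comp mr.bijective)

lemma isCompactObj_of_iso {X X' : C} (e : X ≅ X') (hX : IsCompactObj C X) :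
    IsCompactObj C X' := by
  refine isCompactObj_of_homEquiv (𝟭 C) hX
    (fun W => AddEquiv.mk' (Iso.homCongr e.symm (Iso.refl W)) ?_) ?_
  · intro u v
    simp [Iso.homCongr, Preadditive.comp_add]
  · intro W W' u t
    show e.symm.inv ≫ (u ≫ t) ≫ (Iso.refl W').hom = (e.symm.inv ≫ u ≫ (Iso.refl W).hom) ≫ (𝟭 C).map t
    simp

variable (C) in
/-- The additive shift hom-equivalence `(b⟦i⟧ ⟶ W) ≃+ (b ⟶ W⟦j⟧)` when `i + j = 0`. -/
noncomputable def shiftHomEquiv' [HasShift C ℤ] [∀ n : ℤ, (shiftFunctor C n).Additive]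
    (i j : ℤ) (h : i + j = 0) (b W : C) :
    (b⟦i⟧ ⟶ W) ≃+ (b ⟶ W⟦j⟧) :=
  AddEquiv.mk' ((shiftEquiv' C i j h).toAdjunction.homEquiv b W : (b⟦i⟧ ⟶ W) ≃ (b ⟶ W⟦j⟧))
    (fun u v => by
      haveI : (shiftEquiv' C i j h).functor.Additive := inferInstanceAs (shiftFunctor C i).Additive
      exact (shiftEquiv' C i j h).toAdjunction.homAddEquiv_add b W u v)

lemma shiftHomEquiv'_naturality [HasShift C ℤ] [∀ n : ℤ, (shiftFunctor C n).Additive]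
    (i j : ℤ) (h : i + j = 0) (b : C) {W W' : C} (u : b⟦i⟧ ⟶ W) (t : W ⟶ W') :
    shiftHomEquiv' C i j h b W' (u ≫ t) = shiftHomEquiv' C i j h b W u ≫ t⟦j⟧' :=
  Adjunction.homEquiv_naturality_right _ _ _

lemma isCompactObj_shift [HasShift C ℤ] [∀ n : ℤ, (shiftFunctor C n).Additive]
    {X : C} (hX : IsCompactObj C X) (i : ℤ) : IsCompactObj C (X⟦i⟧) :=
  isCompactObj_of_homEquiv (shiftFunctor C (-i)) hX
    (fun W => shiftHomEquiv' C i (-i) (add_neg_cancel i) X W)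
    (fun u t => shiftHomEquiv'_naturality _ _ _ _ u t)

end AuxCompact

section HFunSec

variable (k : Type w) [Field k] {DA DQ : Type u} [Category.{v} DA] [Category.{v} DQ]
  [Preadditive DA] [Preadditive DQ] [Linear k DQ]

/-- The restricted-Hom functor `a ↦ Hom_{D(A/I)}(q^* a, X)` on compact objects of `D(A)`. -/
def HFun (qE : DA ⥤ DQ) (X : DQ) : (CompObj DA)ᵒᵖ ⥤ ModuleCat.{v} k :=
  (ObjectProperty.ι (fun b : DA => IsCompactObj DA b) ⋙ qE).op ⋙
    (linearYoneda k DQ).obj X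

lemma HFun_map_apply (qE : DA ⥤ DQ) (X : DQ) {a b : (CompObj DA)ᵒᵖ} (e : a ⟶ b)
    (u : qE.obj a.unop.obj ⟶ X) :
    (HFun k qE X).map e u = qE.map e.unop.hom ≫ u := rfl

end HFunSec

/-- Lemma 3.3(1) of the paper.  If the triangulated category `D_c(A)`
of compact objects is right saturated, then `q_* : D(A/I) → D(A)` preserves compact
objects. -/
theorem rightSaturated_implies_quotient_restriction_preservesCompact
    (k : Type w) [Field k]
    (DA DQ : Type u)
    [Category.{v} DA] [HasZeroObject DA] [Preadditive DA] [HasShift DA ℤ]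
    [∀ n : ℤ, (shiftFunctor DA n).Additive] [Pretriangulated DA] [Linear k DA]
    [Category.{v} DQ] [HasZeroObject DQ] [Preadditive DQ] [HasShift DQ ℤ]
    [∀ n : ℤ, (shiftFunctor DQ n).Additive] [Pretriangulated DQ] [Linear k DQ]
    [HasCoproducts.{v} DA] [HasCoproducts.{v} DQ]
    (qE : DA ⥤ DQ) (qR : DQ ⥤ DA)
    [qE.CommShift ℤ] [qE.IsTriangulated] [qR.CommShift ℤ] [qR.IsTriangulated]
    (adjQ : qE ⊣ qR)
    -- standard facts: `q^*` preserves compact objects, and the derived category `D(A)`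
    -- is compactly generated
    (hqEc : ∀ X : DA, IsCompactObj DA X → IsCompactObj DQ (qE.obj X))
    (hgenA : IsCompactlyGenerated DA)
    -- Ext-finiteness (part of the definition of right saturatedness)
    (hfinA : ExtFiniteCompacts k DA) (hfinQ : ExtFiniteCompacts k DQ)
    -- hypothesis: `D_c(A)` is right saturated
    (hsat : RightSaturatedCompacts k DA) :
    ∀ X : DQ, IsCompactObj DQ X → IsCompactObj DA (qR.obj X) := by
  intro X hX
  -- the contravariant cohomological functor `a ↦ Hom(qE a, X)` on compacts
  have hcoh : ∀ (X' Y' Z' : CompObj DA) (f : (X'.obj : DA) ⟶ Y'.obj)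
      (g : (Y'.obj : DA) ⟶ Z'.obj) (h : (Z'.obj : DA) ⟶ X'.obj⟦(1 : ℤ)⟧),
      (Triangle.mk f g h ∈ distTriang DA) →
        Function.Exact ((HFun k qE X).map (homOf DA g).op)
          ((HFun k qE X).map (homOf DA f).op) := by
    intro X' Y' Z' f g h hT
    have hT' := qE.map_distinguished _ hT
    intro u
    constructor
    · intro hu
      obtain ⟨v, hv⟩ := Triangle.yoneda_exact₂ _ hT' u (by
        have : qE.map f ≫ u = 0 := hu
        exact this)
      exact ⟨v, by
        show qE.map g ≫ v = u
        exact hv.symm⟩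
    · rintro ⟨v, rfl⟩
      have key : ∀ w : qE.obj Z'.obj ⟶ X, qE.map f ≫ qE.map g ≫ w = 0 := by
        intro w
        rw [← Category.assoc, ← qE.map_comp]
        have : f ≫ g = 0 := comp_distTriang_mor_zero₁₂ _ hT
        rw [this, Functor.map_zero, zero_comp]
      exact key v
  -- it is of finite type
  have hft : ∀ x : CompObj DA,
      (Set.Finite {n : ℤ | ∃ y : CompObj DA,
          Nonempty ((y.obj : DA) ≅ x.obj⟦n⟧) ∧
            ¬ Subsingleton ((HFun k qE X).obj (op y))}) ∧
      (∀ (n : ℤ) (y : CompObj DA), Nonempty ((y.obj : DA) ≅ x.obj⟦n⟧) →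
          Module.Finite k ((HFun k qE X).obj (op y))) := by
    intro x
    constructor
    · have hS := (hfinQ (qE.obj x.obj) X (hqEc _ x.property) hX).1
      refine Set.Finite.subset (Set.Finite.preimage
        (Set.injOn_of_injective neg_injective) hS) ?_
      rintro n ⟨y, ⟨e⟩, hns⟩
      simp only [Set.mem_preimage, Set.mem_setOf_eq]
      have hnt : Nontrivial (qE.obj y.obj ⟶ X) := not_subsingleton_iff_nontrivial.mp hns
      obtain ⟨a, b, hab⟩ := hnt
      have hu : a - b ≠ 0 := sub_ne_zero.mpr hab
      refine ⟨(shiftHomEquiv' DQ n (-n) (add_neg_cancel n) (qE.obj x.obj) X)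
        ((qE.commShiftIso n).inv.app x.obj ≫ qE.map e.inv ≫ (a - b)), ?_⟩
      intro h0
      apply hu
      have hw : (qE.commShiftIso n).inv.app x.obj ≫ qE.map e.inv ≫ (a - b) = 0 := by
        apply (shiftHomEquiv' DQ n (-n) (add_neg_cancel n) (qE.obj x.obj) X).injective
        rw [h0, map_zero]
      have hcg := congrArg (fun t => qE.map e.hom ≫ (qE.commShiftIso n).hom.app x.obj ≫ t) hw
      simp only [Iso.hom_inv_id_app_assoc, comp_zero] at hcg
      simpa using hcg
    · intro n y _
      haveI := (hfinQ (qE.obj y.obj) X (hqEc _ y.property) hX).2 0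
      show Module.Finite k (qE.obj y.obj ⟶ X)
      exact Module.Finite.equiv (LinearEquiv.ofLinear
        (Linear.rightComp k _ ((shiftFunctorZero DQ ℤ).hom.app X))
        (Linear.rightComp k _ ((shiftFunctorZero DQ ℤ).inv.app X))
        (by ext u; simp [Linear.rightComp]) (by ext u; simp [Linear.rightComp]))
  -- right saturatedness: the functor is representable by a compact object `A`
  obtain ⟨A, ⟨η⟩⟩ := hsat (HFun k qE X) hcoh hft
  -- the comparison morphism `f₀ : A ⟶ qR X`
  let u₀ : qE.obj A.obj ⟶ X := η.inv.app (op A) (𝟙 A)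
  let f₀ : A.obj ⟶ qR.obj X := (adjQ.homEquiv A.obj X) u₀
  have hnat : ∀ (b : CompObj DA) (e : b.obj ⟶ A.obj),
      (η.inv.app (op b)) (homOf DA e) = qE.map e ≫ u₀ := by
    intro b e
    have hnn := congrArg (fun φ : _ ⟶ (HFun k qE X).obj (op b) => φ (𝟙 A))
      (η.inv.naturality ((homOf DA e).op))
    dsimp at hnn
    refine Eq.trans ?_ (hnn.trans rfl)
    congr 1
    exact (Category.comp_id _).symm
  have hbij : ∀ b : CompObj DA, Function.Bijective (fun e : b.obj ⟶ A.obj => e ≫ f₀) := by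
    intro b
    have h1 : (fun e : b.obj ⟶ A.obj => e ≫ f₀) =
        (adjQ.homEquiv b.obj X) ∘ (fun e : b.obj ⟶ A.obj => (η.inv.app (op b)) (homOf DA e)) := by
      funext e
      refine Eq.trans (adjQ.homEquiv_naturality_left e u₀).symm ?_
      exact congrArg (adjQ.homEquiv b.obj X) (hnat b e).symm
    rw [h1]
    exact (adjQ.homEquiv b.obj X).bijective.comp
      ((ConcreteCategory.bijective_of_isIso ((η.symm.app (op b)).hom)).comp
        ⟨fun a b h => congrArg InducedCategory.Hom.hom h, ObjectProperty.homMk_surjective⟩)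
  -- complete `f₀` to a triangle and show the cone vanishes
  obtain ⟨Z, g, h, hT⟩ := Pretriangulated.distinguished_cocone_triangle f₀
  have hzero : ∀ (b : DA), IsCompactObj DA b → ∀ u : b ⟶ Z, u = 0 := by
    intro b hb u
    have h1 : (u ≫ h) ≫ (shiftFunctor DA (1 : ℤ)).map f₀ = 0 := by
      have hh : h ≫ (shiftFunctor DA (1 : ℤ)).map f₀ = 0 := comp_distTriang_mor_zero₃₁ _ hT
      rw [Category.assoc, hh, comp_zero]
    have hw0 : ((shiftHomEquiv' DA (-1) 1 (by omega) b A.obj).symm (u ≫ h)) ≫ f₀ = 0 := by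
      apply (shiftHomEquiv' DA (-1) 1 (by omega) b (qR.obj X)).injective
      rw [shiftHomEquiv'_naturality, AddEquiv.apply_symm_apply, map_zero]
      exact h1
    have hbc : IsCompactObj DA (b⟦(-1 : ℤ)⟧) := isCompactObj_shift hb (-1)
    have hw : (shiftHomEquiv' DA (-1) 1 (by omega) b A.obj).symm (u ≫ h) = 0 := by
      apply (hbij ⟨b⟦(-1 : ℤ)⟧, hbc⟩).injective
      show _ ≫ f₀ = (0 : b⟦(-1 : ℤ)⟧ ⟶ A.obj) ≫ f₀
      rw [hw0, zero_comp]
    have huh : u ≫ h = 0 := by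
      rw [← (shiftHomEquiv' DA (-1) 1 (by omega) b A.obj).apply_symm_apply (u ≫ h), hw, map_zero]
    obtain ⟨v, hv⟩ := Triangle.coyoneda_exact₃ _ hT u huh
    obtain ⟨v', hv'⟩ := (hbij ⟨b, hb⟩).surjective v
    dsimp at hv hv'
    rw [hv, ← hv']
    show (v' ≫ f₀) ≫ g = 0
    rw [Category.assoc]
    have hfg : f₀ ≫ g = 0 := comp_distTriang_mor_zero₁₂ _ hT
    rw [hfg, comp_zero]
  obtain ⟨ιg, Gg, hGc, hgen⟩ := hgenA
  have hZ : IsZero Z := by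
    apply hgen
    intro i n u
    have h0 : (shiftHomEquiv' DA (-n) n (by omega) (Gg i) Z).symm u = 0 :=
      hzero _ (isCompactObj_shift (hGc i) (-n)) _
    rw [← (shiftHomEquiv' DA (-n) n (by omega) (Gg i) Z).apply_symm_apply u, h0, map_zero]
  have : IsIso f₀ := (Triangle.isZero₃_iff_isIso₁ _ hT).mp hZ
  exact isCompactObj_of_iso (asIso f₀) A.property


end DGRecollement
end

section
/- Let A be a DG category over a field k and let I be a strictly full DG subcategory of A, with Drinfeld quotient A/I. If D_c(A) is right saturated, then the restriction q* : D_c(A) → D_c(A/I) of the extension-of-scalars functor admits a right adjoint, namely the functor sending b ∈ D_c(A/I) to the object of D_c(A) representing the contravariant cohomological functor a ↦ Hom_{D(A/I)}(q*(a), b); this right adjoint agrees with the restriction of q_* to D_c(A/I). -/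
namespace DGRecollement

open CategoryTheory Limits Pretriangulated Opposite

universe v u w u'

section AuxShift

variable {C : Type u} [Category.{v} C] [Preadditive C] [HasShift C ℤ]
  [∀ n : ℤ, (shiftFunctor C n).Additive]

/-- The hom-equivalence of the shift adjunction, as an additive equivalence. -/
noncomputable def shiftHomAddEquiv (m m' : ℤ) (h : m + m' = 0) (X W : C) :
    (X⟦m⟧ ⟶ W) ≃+ (X ⟶ W⟦m'⟧) :=
  AddEquiv.mk' ((shiftEquiv' C m m' h).toAdjunction.homEquiv X W) (fun f g => by
    erw [Adjunction.homEquiv_unit, Adjunction.homEquiv_unit, Adjunction.homEquiv_unit]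
    exact (congrArg _ ((shiftFunctor C m').map_add)).trans (Preadditive.comp_add _ _ _ _ _ _))

@[simp] lemma shiftHomAddEquiv_apply (m m' : ℤ) (h : m + m' = 0) (X W : C) (f : X⟦m⟧ ⟶ W) :
    shiftHomAddEquiv m m' h X W f = (shiftEquiv' C m m' h).toAdjunction.homEquiv X W f := rfl

lemma shiftHomAddEquiv_naturality (m m' : ℤ) (h : m + m' = 0) (X : C) {W W' : C}
    (f : X⟦m⟧ ⟶ W) (g : W ⟶ W') :
    shiftHomAddEquiv m m' h X W' (f ≫ g) = shiftHomAddEquiv m m' h X W f ≫ g⟦m'⟧' := by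
  exact ((shiftEquiv' C m m' h).toAdjunction.homEquiv_naturality_right f g)

lemma shiftAdj_homEquiv_zero (m m' : ℤ) (h : m + m' = 0) (X W : C) :
    (shiftEquiv' C m m' h).toAdjunction.homEquiv X W 0 = 0 := by
  exact map_zero (shiftHomAddEquiv m m' h X W)

lemma isCompactObj_shift_s9 [HasCoproducts.{v} C] {X : C} (hX : IsCompactObj C X)
    (m m' : ℤ) (h : m + m' = 0) : IsCompactObj C (X⟦m⟧) := by
  intro ι Y _
  letI : DecidableEq ι := Classical.decEq ι
  set E : ∀ W : C, (X⟦m⟧ ⟶ W) ≃+ (X ⟶ W⟦m'⟧) := fun W => shiftHomAddEquiv m m' h X W with hE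
  set Y' : ι → C := fun i => (Y i)⟦m'⟧ with hY'
  set c : (∐ Y') ⟶ (∐ Y)⟦m'⟧ := sigmaComparison (shiftFunctor C m') Y with hc
  haveI : IsIso c := by rw [hc]; infer_instance
  set Φ : (Π₀ i, (X⟦m⟧ ⟶ Y i)) →+ (X⟦m⟧ ⟶ ∐ Y) := DFinsupp.sumAddHom (fun i =>
        AddMonoidHom.mk' (fun (g : X⟦m⟧ ⟶ Y i) => g ≫ Sigma.ι Y i)
          (fun _ _ => Preadditive.add_comp _ _ _ _ _ _)) with hΦdef
  set Φ' : (Π₀ i, (X ⟶ Y' i)) →+ (X ⟶ ∐ Y') := DFinsupp.sumAddHom (fun i =>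
        AddMonoidHom.mk' (fun (g : X ⟶ Y' i) => g ≫ Sigma.ι Y' i)
          (fun _ _ => Preadditive.add_comp _ _ _ _ _ _)) with hΦ'def
  have hΦ' : Function.Bijective Φ' := hX Y'
  set M : (Π₀ i, (X⟦m⟧ ⟶ Y i)) ≃+ (Π₀ i, (X ⟶ Y' i)) :=
    DFinsupp.mapRange.addEquiv (fun i => E (Y i)) with hM
  have hcomm : ∀ t : Π₀ i, (X⟦m⟧ ⟶ Y i), E (∐ Y) (Φ t) = Φ' (M t) ≫ c := by
    have : (E (∐ Y)).toAddMonoidHom.comp Φ =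
        (AddMonoidHom.mk' (fun u : X ⟶ ∐ Y' => u ≫ c)
          (fun _ _ => Preadditive.add_comp _ _ _ _ _ _)).comp
            (Φ'.comp M.toAddMonoidHom) := by
      apply DFinsupp.addHom_ext
      intro i g
      simp only [AddMonoidHom.comp_apply, AddEquiv.coe_toAddMonoidHom, hM,
        DFinsupp.mapRange.addEquiv_apply, DFinsupp.mapRange_single, hΦdef, hΦ'def,
        DFinsupp.sumAddHom_single]
      show shiftHomAddEquiv m m' h X (∐ Y) (g ≫ Sigma.ι Y i)
        = (shiftHomAddEquiv m m' h X (Y i) g ≫ Sigma.ι Y' i) ≫ c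
      rw [shiftHomAddEquiv_naturality, Category.assoc, hc, ι_comp_sigmaComparison]
    intro t
    exact DFunLike.congr_fun this t
  have hfun : ⇑Φ = ⇑(E (∐ Y)).symm ∘ (fun u => u ≫ c) ∘ ⇑Φ' ∘ ⇑M := by
    funext t
    simp only [Function.comp_apply]
    rw [← hcomm t, AddEquiv.symm_apply_apply]
  show Function.Bijective ⇑Φ
  rw [hfun]
  exact (((E (∐ Y)).symm.bijective).comp
    (((asIso c).homToEquiv).bijective.comp (hΦ'.comp M.bijective)))

end AuxShift

/-- If `D_c(A)` is right saturated, then the restriction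
`q^* : D_c(A) → D_c(A/I)` of the extension-of-scalars functor admits a right adjoint,
sending `b ∈ D_c(A/I)` to the object of `D_c(A)` representing the contravariant
cohomological functor `a ↦ Hom_{D(A/I)}(q^*(a), b)` (this representing property is
exactly the adjunction `Hom_{D_c(A)}(a, q'_*(b)) ≅ Hom_{D_c(A/I)}(q^*(a), b)`), and this
right adjoint agrees with the restriction of `q_*` to `D_c(A/I)`. -/
theorem rightSaturated_gives_right_adjoint_on_compacts
    (k : Type w) [Field k]
    (DA DQ : Type u)
    [Category.{v} DA] [HasZeroObject DA] [Preadditive DA] [HasShift DA ℤ]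
    [∀ n : ℤ, (shiftFunctor DA n).Additive] [Pretriangulated DA] [Linear k DA]
    [Category.{v} DQ] [HasZeroObject DQ] [Preadditive DQ] [HasShift DQ ℤ]
    [∀ n : ℤ, (shiftFunctor DQ n).Additive] [Pretriangulated DQ] [Linear k DQ]
    [HasCoproducts.{v} DA] [HasCoproducts.{v} DQ]
    (qE : DA ⥤ DQ) (qR : DQ ⥤ DA)
    [qE.CommShift ℤ] [qE.IsTriangulated] [qR.CommShift ℤ] [qR.IsTriangulated]
    (adjQ : qE ⊣ qR)
    -- standard facts: `q^*` preserves compact objects, and the derived category `D(A)`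
    -- is compactly generated
    (hqEc : ∀ X : DA, IsCompactObj DA X → IsCompactObj DQ (qE.obj X))
    (hgenA : IsCompactlyGenerated DA)
    -- Ext-finiteness (part of the definition of right saturatedness)
    (hfinA : ExtFiniteCompacts k DA) (hfinQ : ExtFiniteCompacts k DQ)
    -- hypothesis: `D_c(A)` is right saturated
    (hsat : RightSaturatedCompacts k DA) :
    ∃ (qE' : CompObj DA ⥤ CompObj DQ) (qR' : CompObj DQ ⥤ CompObj DA),
      -- `qE'` is the restriction of `q^*` to the compact objects …
      Nonempty (qE' ⋙ ObjectProperty.ι _ ≅ ObjectProperty.ι _ ⋙ qE) ∧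
      -- … it admits a right adjoint `qR'` …
      Nonempty (qE' ⊣ qR') ∧
      -- … which agrees with the restriction of `q_*`:
      (∀ b : CompObj DQ, Nonempty (((qR'.obj b).obj : DA) ≅ qR.obj b.obj)) := by
  classical
  let qE' : CompObj DA ⥤ CompObj DQ :=
    ObjectProperty.lift _ (ObjectProperty.ι _ ⋙ qE)
      (fun X => hqEc X.obj X.property)
  let Hb : CompObj DQ → ((CompObj DA)ᵒᵖ ⥤ ModuleCat.{v} k) := fun b =>
    (ObjectProperty.ι _ ⋙ qE).op ⋙ (linearYoneda k DQ).obj b.obj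
  -- each `Hb b` is representable by a compact object of `DA`
  have hrep : ∀ b : CompObj DQ, ∃ A : CompObj DA,
      Nonempty (Hb b ≅ (linearYoneda k (CompObj DA)).obj A) := by
    intro b
    apply hsat
    · -- cohomological
      intro X Y Z f g h hT
      have hT' := qE.map_distinguished _ hT
      intro u
      constructor
      · intro hu
        have hu' : qE.map f ≫ u = 0 := by
          have : ((Hb b).map (homOf DA f).op) u = qE.map f ≫ u := rfl
          rw [← this]; exact hu
        obtain ⟨v, hv⟩ := Triangle.yoneda_exact₂ _ hT' u hu'
        exact ⟨v, hv.symm⟩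
      · rintro ⟨v, rfl⟩
        show qE.map f ≫ (qE.map g ≫ (show qE.obj Z.obj ⟶ b.obj from v)) = 0
        rw [← Category.assoc]
        have hz : qE.map f ≫ qE.map g = 0 := comp_distTriang_mor_zero₁₂ _ hT'
        rw [hz, Limits.zero_comp]
    · -- finite type
      intro x
      obtain ⟨h1, h2⟩ := hfinQ (qE.obj x.obj) b.obj (hqEc _ x.property) b.property
      constructor
      · apply Set.Finite.subset (h1.image (fun n => -n))
        rintro n ⟨y, ⟨ψ⟩, hns⟩
        have hnt : Nontrivial (qE.obj y.obj ⟶ b.obj) := by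
          have := not_subsingleton_iff_nontrivial.1 hns
          exact this
        obtain ⟨f, hf⟩ := exists_ne (0 : qE.obj y.obj ⟶ b.obj)
        refine ⟨-n, ?_, by simp⟩
        have Θ : ((qE.obj x.obj)⟦(n : ℤ)⟧ ≅ qE.obj y.obj) :=
          ((qE.commShiftIso n).app x.obj).symm ≪≫ (qE.mapIso ψ).symm
        have hg₁ : Θ.hom ≫ f ≠ 0 := by
          intro h0
          apply hf
          have : f = Θ.inv ≫ (Θ.hom ≫ f) := by simp
          rw [this, h0, Limits.comp_zero]
        refine ⟨(shiftEquiv' DQ n (-n) (by ring)).toAdjunction.homEquiv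
          (qE.obj x.obj) b.obj (Θ.hom ≫ f), fun h0 => hg₁ ?_⟩
        have := congrArg ((shiftEquiv' DQ n (-n) (by ring)).toAdjunction.homEquiv
          (qE.obj x.obj) b.obj).symm h0
        rw [Equiv.symm_apply_apply] at this
        refine this.trans ?_
        exact (Equiv.symm_apply_eq _).2 (shiftAdj_homEquiv_zero n (-n) (by ring) _ _).symm
      · intro n y _
        have hfin0 := (hfinQ (qE.obj y.obj) b.obj (hqEc _ y.property) b.property).2 0
        have ε := Linear.homCongr k (Iso.refl (qE.obj y.obj))
          ((shiftFunctorZero DQ ℤ).app b.obj)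
        exact Module.Finite.equiv ε
  choose Aobj hAiso using hrep
  let isoA : ∀ b : CompObj DQ, Hb b ≅ (linearYoneda k (CompObj DA)).obj (Aobj b) :=
    fun b => (hAiso b).some
  let e : ∀ (X : CompObj DA) (Y : CompObj DQ), (qE'.obj X ⟶ Y) ≃ (X ⟶ Aobj Y) :=
    fun X Y => (ObjectProperty.fullyFaithfulι _).homEquiv.trans
      ((forget (ModuleCat k)).mapIso ((isoA Y).app (op X))).toEquiv
  have he : ∀ (X' X : CompObj DA) (Y : CompObj DQ) (f : X' ⟶ X) (g : qE'.obj X ⟶ Y),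
      e X' Y (qE'.map f ≫ g) = f ≫ e X Y g := by
    intro X' X Y f g
    have hnat := (isoA Y).hom.naturality f.op
    have := congrArg (fun φ => ModuleCat.Hom.hom φ ((ObjectProperty.fullyFaithfulι _).homEquiv g)) hnat
    exact this
  let qR' : CompObj DQ ⥤ CompObj DA := Adjunction.rightAdjointOfEquiv e he
  have adj' : qE' ⊣ qR' := Adjunction.adjunctionOfEquivRight e he
  refine ⟨qE', qR', ⟨ObjectProperty.liftCompιIso _ _ _⟩, ⟨adj'⟩, ?_⟩
  -- the right adjoint agrees with the restriction of `q_*`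
  intro b
  set A : CompObj DA := Aobj b with hA
  let eps : qE.obj A.obj ⟶ b.obj := ((e A b).symm (𝟙 A)).hom
  let φ : A.obj ⟶ qR.obj b.obj := (adjQ.homEquiv A.obj b.obj) eps
  have hbij : ∀ (x : CompObj DA), Function.Bijective (fun g : x.obj ⟶ A.obj => g ≫ φ) := by
    intro x
    have hfun : (fun g : x.obj ⟶ A.obj => g ≫ φ)
        = fun g => (adjQ.homEquiv x.obj b.obj) ((e x b).symm (ObjectProperty.homMk g)).hom := by
      funext g
      have h1 : (e x b).symm (ObjectProperty.homMk g) = ObjectProperty.homMk (qE.map g ≫ eps) := by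
        rw [Equiv.symm_apply_eq]
        have h2 := he x A b (ObjectProperty.homMk g) ((e A b).symm (𝟙 A))
        have h3 : ObjectProperty.homMk g ≫ (e A b) ((e A b).symm (𝟙 A)) = ObjectProperty.homMk g := by
          rw [Equiv.apply_symm_apply]
          exact Category.comp_id _
        exact (h3.symm.trans h2.symm)
      rw [h1]
      exact (Adjunction.homEquiv_naturality_left _ _ _).symm
    rw [hfun]
    exact (adjQ.homEquiv x.obj b.obj).bijective.comp
      ((ObjectProperty.fullyFaithfulι _).homEquiv.bijective.comp
        ((e x b).symm.bijective.comp (ObjectProperty.fullyFaithfulι _).homEquiv.symm.bijective))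
  obtain ⟨Z, u, w, hT⟩ := Pretriangulated.distinguished_cocone_triangle φ
  have hzero : ∀ (x : CompObj DA) (f : x.obj ⟶ Z), f = 0 := by
    intro x f
    have hw : f ≫ w = 0 := by
      have hwφ : w ≫ φ⟦(1 : ℤ)⟧' = 0 := comp_distTriang_mor_zero₃₁ _ hT
      set Esh := (shiftEquiv' DA (-1 : ℤ) 1 (by ring)).toAdjunction with hEsh
      have hinj : Function.Injective
          (fun (t : x.obj ⟶ A.obj⟦(1 : ℤ)⟧) => t ≫ φ⟦(1 : ℤ)⟧') := by
        have key : ∀ t : x.obj ⟶ A.obj⟦(1 : ℤ)⟧,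
            (Esh.homEquiv x.obj (qR.obj b.obj)).symm (t ≫ φ⟦(1 : ℤ)⟧') =
              ((Esh.homEquiv x.obj A.obj).symm t) ≫ φ := by
          intro t
          rw [Equiv.symm_apply_eq, Adjunction.homEquiv_naturality_right]
          exact congrArg (fun s => s ≫ φ⟦(1 : ℤ)⟧')
            (Equiv.apply_symm_apply (Esh.homEquiv x.obj A.obj) t).symm
        intro t t' hh
        have h1 := congrArg (Esh.homEquiv x.obj (qR.obj b.obj)).symm hh
        replace h1 := (key t).symm.trans (h1.trans (key t'))
        have h2 := (hbij ⟨x.obj⟦(-1 : ℤ)⟧,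
          isCompactObj_shift_s9 x.property (-1) 1 (by ring)⟩).1 h1
        have h3 := congrArg (Esh.homEquiv x.obj A.obj) h2
        exact (Esh.homEquiv x.obj A.obj).symm.injective h2
      apply hinj
      show (f ≫ w) ≫ φ⟦(1 : ℤ)⟧' = 0 ≫ φ⟦(1 : ℤ)⟧'
      rw [Category.assoc, hwφ, Limits.comp_zero, Limits.zero_comp]
    obtain ⟨g, hg⟩ := Triangle.coyoneda_exact₃ _ hT f hw
    obtain ⟨g', hg'⟩ := (hbij x).2 g
    have hg'' : g' ≫ φ = g := hg'
    rw [hg, ← hg'']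
    show (g' ≫ φ) ≫ u = 0
    rw [Category.assoc]
    have hφu : φ ≫ u = 0 := comp_distTriang_mor_zero₁₂ _ hT
    show g' ≫ φ ≫ u = 0
    rw [hφu, Limits.comp_zero]
  obtain ⟨ι, G, hGc, hgen⟩ := hgenA
  have hZ : IsZero Z := by
    apply hgen
    intro i n f
    have hf' : ((shiftEquiv' DA (-n) n (by ring)).toAdjunction.homEquiv (G i) Z).symm f
        = 0 :=
      hzero ⟨(G i)⟦(-n : ℤ)⟧, isCompactObj_shift_s9 (hGc i) (-n) n (by ring)⟩ _
    have := congrArg ((shiftEquiv' DA (-n) n (by ring)).toAdjunction.homEquiv (G i) Z) hf'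
    exact ((Equiv.apply_symm_apply _ f).symm.trans this).trans (shiftAdj_homEquiv_zero _ _ _ _ _)
  have hiso : IsIso φ := (Triangle.isZero₃_iff_isIso₁ _ hT).1 hZ
  have : (qR'.obj b).obj = A.obj := rfl
  rw [this]
  exact ⟨asIso φ⟩


end DGRecollement
end
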